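/- arXiv:2410.22820 — 3 statements merged into one kernel-verified Lean document; each statement's English description precedes it below -/
import Mathlib

section
/- For every configuration x in 𝒳 of a PIN model, the mean drift satisfies D(x) = (1−ρ)(Pᵀ − I)θ(x) + ρ·Q(ξ(x)), where Q : P(𝒜×𝒜) → ℝ^𝒜 is the linear operator with entries (Q(ξ))_i = Σ_{ℓ∈𝒜} Σ_{j∈𝒜} ξ_{jℓ} φ_{ji}(ℓ) − Σ_{ℓ∈𝒜} ξ_{iℓ}. -/
open Finset Filter

noncomputable section

/-- The empirical type (state frequencies) of a configuration. -/
def confType {V A : Type*} [Fintype V] [DecidableEq A] (x : V → A) (i : A) : ℝ :=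
  ((Finset.univ.filter fun v => x v = i).card : ℝ) / (Fintype.card V : ℝ)

/-- The boundary (empirical link-pair frequencies) of a configuration. -/
def boundary {V A : Type*} [DecidableEq A] (E : Finset (V × V)) (x : V → A) (i j : A) : ℝ :=
  ((E.filter fun e => x e.1 = i ∧ x e.2 = j).card : ℝ) / (E.card : ℝ)

/-- Off-diagonal part of the PIN transition matrix. -/
def Toff {V A : Type*} [Fintype V] [DecidableEq V] [DecidableEq A]
    (E : Finset (V × V)) (ρ : ℝ) (P : A → A → ℝ) (φ : A → A → A → ℝ) (x y : V → A) : ℝ :=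
  if (Finset.univ.filter fun v => x v ≠ y v).card = 1 then
    ∑ u ∈ Finset.univ.filter fun v => x v ≠ y v,
      ((1 - ρ) * (1 / (Fintype.card V : ℝ)) * P (x u) (y u)
        + (ρ / (E.card : ℝ)) * ∑ e ∈ E.filter fun e => e.1 = u, φ (x u) (y u) (x e.2))
  else 0

/-- The PIN transition matrix. -/
def pinTrans {V A : Type*} [Fintype V] [DecidableEq V] [Fintype A] [DecidableEq A]
    (E : Finset (V × V)) (ρ : ℝ) (P : A → A → ℝ) (φ : A → A → A → ℝ) (x y : V → A) : ℝ :=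
  if x = y then 1 - ∑ z : V → A, Toff E ρ P φ x z else Toff E ρ P φ x y

/-- The mean drift of the PIN model. -/
def meanDrift {V A : Type*} [Fintype V] [DecidableEq V] [Fintype A] [DecidableEq A]
    (E : Finset (V × V)) (ρ : ℝ) (P : A → A → ℝ) (φ : A → A → A → ℝ) (x : V → A) (i : A) : ℝ :=
  (Fintype.card V : ℝ) * ∑ y : V → A, pinTrans E ρ P φ x y * (confType y i - confType x i)

/-- The limit drift of the PIN model. -/
def limitDrift {A : Type*} [Fintype A] (ρ : ℝ) (P : A → A → ℝ) (φ : A → A → A → ℝ)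
    (θ : A → ℝ) (i : A) : ℝ :=
  ((1 - ρ) * ∑ j, P j i * θ j) + (ρ * ∑ ℓ, θ ℓ * ∑ j, φ j i ℓ * θ j) - θ i

/-- The linear operator Q acting on boundaries. -/
def Qop {A : Type*} [Fintype A] (φ : A → A → A → ℝ) (ξ : A → A → ℝ) (i : A) : ℝ :=
  (∑ ℓ, ∑ j, ξ j ℓ * φ j i ℓ) - ∑ ℓ, ξ i ℓ

/-- Membership in the probability simplex over `A`. -/
def inSimplex {A : Type*} [Fintype A] (θ : A → ℝ) : Prop :=
  (∀ i, 0 ≤ θ i) ∧ ∑ i, θ i = 1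

/-- The hypotheses on the parameters of a PIN model: `ρ ∈ [0,1]`, `P` and each `φ(ℓ)`
row-stochastic and nonnegative, the interaction graph nonempty and without self-loops. -/
def IsPinModel {V A : Type*} [Fintype A] (E : Finset (V × V)) (ρ : ℝ)
    (P : A → A → ℝ) (φ : A → A → A → ℝ) : Prop :=
  0 ≤ ρ ∧ ρ ≤ 1 ∧ (∀ i j, 0 ≤ P i j) ∧ (∀ i, ∑ j, P i j = 1) ∧
    (∀ i j ℓ, 0 ≤ φ i j ℓ) ∧ (∀ i ℓ, ∑ j, φ i j ℓ = 1) ∧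
    E.Nonempty ∧ ∀ e ∈ E, e.1 ≠ e.2

/-- Stationary distribution of a PIN model. -/
def IsPinStationary {V A : Type*} [Fintype V] [DecidableEq V] [Fintype A] [DecidableEq A]
    (E : Finset (V × V)) (ρ : ℝ) (P : A → A → ℝ) (φ : A → A → A → ℝ)
    (μ : (V → A) → ℝ) : Prop :=
  (∀ x, 0 ≤ μ x) ∧ (∑ x : V → A, μ x = 1) ∧
    ∀ y : V → A, ∑ x : V → A, μ x * pinTrans E ρ P φ x y = μ y

/-- The total mixing gap of a graph. -/
def mixingGap {V : Type*} [Fintype V] [DecidableEq V] (E : Finset (V × V)) : ℝ :=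
  sSup {w : ℝ | ∃ S U : Finset V, Disjoint S U ∧
    w = |((E.filter fun e => e.1 ∈ S ∧ e.2 ∈ U).card : ℝ) / (E.card : ℝ) -
      ((S.card : ℝ) * (U.card : ℝ)) / ((Fintype.card V : ℝ) * ((Fintype.card V : ℝ) - 1))|}

open Classical in
/-- Total `μ`-mass of the set of configurations satisfying `p`. -/
def massOf {X : Type*} [Fintype X] (μ : X → ℝ) (p : X → Prop) : ℝ :=
  ∑ x, if p x then μ x else 0

/-! A jump of the chain changes a single node `u` from `x u` to `a`, which moves the type by
`(e_a - e_{x u}) / n`; hence `D(x) = ∑ u, ∑ a, rate(u, a) (e_a - e_{x u})`. Since `P` and every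
`φ(ℓ)` are row-stochastic, summing over `a` leaves `P (x u) i - δ_{x u, i}` from the copying
part and `φ (x u) i (x v) - δ_{x u, i}` for every link `(u, v)` from the interaction part.
Grouping nodes by their state gives the type `θ(x)`, grouping links by their pair of states gives
the boundary `ξ(x)`. -/

open Function

lemma eq_of_update_eq_update {α β : Type*} [DecidableEq α] {x : α → β} {u v : α} {a b : β}
    (ha : a ≠ x u) (h : update x u a = update x v b) : u = v ∧ a = b := by
  obtain rfl : u = v := by
    by_contra huv
    exact ha (by simpa [update_of_ne huv] using congrFun h u)
  exact ⟨rfl, update_injective x u h⟩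

lemma sum_comp_update_sub {α β M : Type*} [Fintype α] [DecidableEq α] [AddCommGroup M]
    (g : β → M) (x : α → β) (u : α) (a : β) :
    ∑ v, g (update x u a v) - ∑ v, g (x v) = g a - g (x u) := by
  rw [← add_sum_erase _ _ (mem_univ u), ← add_sum_erase _ _ (mem_univ u), update_self,
    sum_congr rfl fun v hv => by rw [update_of_ne (ne_of_mem_erase hv)]]
  abel

lemma sum_comp_eq_sum_card_fiber_mul {ι κ R : Type*} [Fintype κ] [DecidableEq κ] [Semiring R]
    (s : Finset ι) (π : ι → κ) (g : κ → R) :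
    ∑ t ∈ s, g (π t) = ∑ k, (#{t ∈ s | π t = k} : R) * g k := by
  simp_rw [← sum_fiberwise' s π g, sum_const, nsmul_eq_mul]

lemma sum_mul_indicator_sub {A : Type*} [Fintype A] [DecidableEq A] {r : A → ℝ}
    (hr : ∑ a, r a = 1) (i : A) (c : ℝ) :
    ∑ a, r a * ((if a = i then 1 else 0) - c) = r i - c := by
  simp [mul_sub, sum_sub_distrib, ← sum_mul, hr]

lemma Qop_eq_sum_mul_sub {A : Type*} [Fintype A] [DecidableEq A] (φ : A → A → A → ℝ)
    (ξ : A → A → ℝ) (i : A) :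
    Qop φ ξ i = ∑ j, ∑ ℓ, ξ j ℓ * (φ j i ℓ - if j = i then 1 else 0) := by
  simp [Qop, mul_sub, sum_sub_distrib, sum_comm (γ := A) (f := fun j ℓ => ξ j ℓ * φ j i ℓ)]

lemma card_mul_confType_update_sub {V A : Type*} [Fintype V] [DecidableEq V] [DecidableEq A]
    (x : V → A) (u : V) (a i : A) :
    (Fintype.card V : ℝ) * (confType (update x u a) i - confType x i)
      = (if a = i then 1 else 0) - if x u = i then 1 else 0 := by
  have : Nonempty V := ⟨u⟩
  rw [confType, confType, ← sub_div, mul_div_cancel₀ _ (by positivity), natCast_card_filter,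
    natCast_card_filter]
  exact sum_comp_update_sub (fun b => if b = i then (1 : ℝ) else 0) x u a

lemma one_div_card_mul_sum_comp {V A : Type*} [Fintype V] [Fintype A] [DecidableEq A]
    (x : V → A) (g : A → ℝ) :
    1 / (Fintype.card V : ℝ) * ∑ v, g (x v) = ∑ j, confType x j * g j := by
  rw [sum_comp_eq_sum_card_fiber_mul, mul_sum]
  refine sum_congr rfl fun j _ => ?_
  rw [confType]
  ring

lemma one_div_card_mul_sum_edges {V A : Type*} [Fintype A] [DecidableEq A]
    (E : Finset (V × V)) (x : V → A) (h : A → A → ℝ) :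
    1 / (#E : ℝ) * ∑ e ∈ E, h (x e.1) (x e.2) = ∑ j, ∑ ℓ, boundary E x j ℓ * h j ℓ := by
  rw [sum_comp_eq_sum_card_fiber_mul E (fun e => (x e.1, x e.2)) (fun q => h q.1 q.2),
    Fintype.sum_prod_type, mul_sum]
  refine sum_congr rfl fun j _ => ?_
  rw [mul_sum]
  refine sum_congr rfl fun ℓ _ => ?_
  simp only [boundary, Prod.mk.injEq]
  ring

lemma sum_sum_out_edges {V β M : Type*} [Fintype V] [DecidableEq V] [AddCommMonoid M]
    (E : Finset (V × V)) (x : V → β) (h : β → β → M) :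
    ∑ u, ∑ e ∈ E with e.1 = u, h (x u) (x e.2) = ∑ e ∈ E, h (x e.1) (x e.2) := by
  rw [← sum_fiberwise E Prod.fst]
  exact sum_congr rfl fun u _ => sum_congr rfl fun e he => by rw [(mem_filter.mp he).2]

section PinModel

variable {V A : Type*} [Fintype V] [DecidableEq V] [DecidableEq A]
  (E : Finset (V × V)) (ρ : ℝ) (P : A → A → ℝ) (φ : A → A → A → ℝ)

def siteRate (x : V → A) (u : V) (a : A) : ℝ :=
  (1 - ρ) * (1 / (Fintype.card V : ℝ)) * P (x u) a
    + (ρ / (#E : ℝ)) * ∑ e ∈ E with e.1 = u, φ (x u) a (x e.2)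

lemma Toff_update_of_ne {x : V → A} {u : V} {a : A} (ha : a ≠ x u) :
    Toff E ρ P φ x (update x u a) = siteRate E ρ P φ x u a := by
  have hdiff : ({v | x v ≠ update x u a v} : Finset V) = {u} := by
    ext v
    by_cases hv : v = u
    · subst hv
      simpa using Ne.symm ha
    · simp [hv]
  simp [Toff, hdiff, siteRate]

lemma exists_eq_update_of_Toff_ne_zero {x y : V → A} (h : Toff E ρ P φ x y ≠ 0) :
    ∃ u, y u ≠ x u ∧ y = update x u (y u) := by
  have hcard : #{v | x v ≠ y v} = 1 := by
    by_contra hcard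
    exact h (if_neg hcard)
  obtain ⟨u, hu⟩ := card_eq_one.mp hcard
  have hdiff (v : V) : x v ≠ y v ↔ v = u := by
    simpa using congrArg (v ∈ ·) hu
  refine ⟨u, Ne.symm ((hdiff u).2 rfl), eq_update_iff.2 ⟨rfl, fun v hv => ?_⟩⟩
  by_contra hne
  exact hv ((hdiff v).1 (Ne.symm hne))

variable [Fintype A]

lemma sum_pinTrans_mul_sub (x : V → A) (f : (V → A) → ℝ) :
    ∑ y, pinTrans E ρ P φ x y * (f y - f x) = ∑ y, Toff E ρ P φ x y * (f y - f x) := by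
  refine sum_congr rfl fun y _ => ?_
  by_cases h : x = y
  · simp [h]
  · simp [pinTrans, h]

-- The pairs with `a = x u` contribute `0`, so all of `V × A` can be summed over.
lemma sum_Toff_mul_sub (x : V → A) (f : (V → A) → ℝ) :
    ∑ y, Toff E ρ P φ x y * (f y - f x)
      = ∑ u, ∑ a, siteRate E ρ P φ x u a * (f (update x u a) - f x) := by
  rw [← Fintype.sum_prod_type']
  symm
  refine sum_bij_ne_zero (fun p _ _ => update x p.1 p.2) (fun _ _ _ => mem_univ _)
    ?inj ?surj ?val
  case inj =>
    rintro ⟨u₁, a₁⟩ - h₁ ⟨u₂, a₂⟩ - - heq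
    have ha₁ : a₁ ≠ x u₁ := by
      rintro rfl
      simp at h₁
    obtain ⟨rfl, rfl⟩ := eq_of_update_eq_update ha₁ heq
    rfl
  case surj =>
    intro y _ hy
    obtain ⟨u, hu, hyu⟩ := exists_eq_update_of_Toff_ne_zero E ρ P φ (left_ne_zero_of_mul hy)
    refine ⟨(u, y u), mem_univ _, ?_, hyu.symm⟩
    rwa [← Toff_update_of_ne E ρ P φ hu, ← hyu]
  case val =>
    rintro ⟨u, a⟩ - h
    have ha : a ≠ x u := by
      rintro rfl
      simp at h
    rw [Toff_update_of_ne E ρ P φ ha]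

lemma sum_siteRate_mul_indicator_sub (hP : ∀ j, ∑ a, P j a = 1)
    (hφ : ∀ j ℓ, ∑ a, φ j a ℓ = 1) (x : V → A) (u : V) (i : A) :
    ∑ a, siteRate E ρ P φ x u a * ((if a = i then 1 else 0) - if x u = i then 1 else 0)
      = (1 - ρ) * (1 / (Fintype.card V : ℝ)) * (P (x u) i - if x u = i then 1 else 0)
        + ρ / (#E : ℝ) *
          ∑ e ∈ E with e.1 = u, (φ (x u) i (x e.2) - if x u = i then 1 else 0) := by
  simp only [siteRate, add_mul, sum_add_distrib, mul_assoc, sum_mul, ← mul_sum]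
  rw [sum_comm]
  simp only [sum_mul_indicator_sub (hP _), sum_mul_indicator_sub (hφ _ _)]

end PinModel

theorem meanDrift_eq_general {V A : Type*} [Fintype V] [DecidableEq V]
    [Fintype A] [DecidableEq A]
    (E : Finset (V × V)) (ρ : ℝ) (P : A → A → ℝ) (φ : A → A → A → ℝ)
    (hmodel : IsPinModel E ρ P φ) (x : V → A) (i : A) :
    meanDrift E ρ P φ x i =
      (1 - ρ) * ((∑ j, P j i * confType x j) - confType x i)
        + ρ * Qop φ (boundary E x) i := by
  obtain ⟨-, -, -, hP, -, hφ, -⟩ := hmodel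
  have hdrift : meanDrift E ρ P φ x i = ∑ u, ∑ a, siteRate E ρ P φ x u a *
      ((if a = i then 1 else 0) - if x u = i then 1 else 0) := by
    simp_rw [meanDrift, sum_pinTrans_mul_sub, sum_Toff_mul_sub, mul_sum,
      mul_left_comm _ (siteRate _ _ _ _ _ _ _), card_mul_confType_update_sub]
  have htype : ∑ j, P j i * confType x j - confType x i
      = 1 / (Fintype.card V : ℝ) * ∑ u, (P (x u) i - if x u = i then 1 else 0) := by
    rw [one_div_card_mul_sum_comp x (fun j => P j i - if j = i then 1 else 0)]
    simp [mul_sub, sum_sub_distrib, mul_comm]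
  rw [hdrift, htype, Qop_eq_sum_mul_sub, ← one_div_card_mul_sum_edges E x
    (fun j ℓ => φ j i ℓ - if j = i then 1 else 0), ← sum_sum_out_edges E x
    (fun j ℓ => φ j i ℓ - if j = i then 1 else 0)]
  simp only [sum_siteRate_mul_indicator_sub E ρ P φ hP hφ, sum_add_distrib, ← mul_sum]
  ring

/-- Lemma: representation of the mean drift.
For every configuration `x` of a PIN model, the mean drift satisfies
`D(x) = (1−ρ)(Pᵀ − I)θ(x) + ρ·Q(ξ(x))`. -/
theorem meanDrift_eq {V A : Type*} [Fintype V] [DecidableEq V]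
    [Fintype A] [DecidableEq A] [Nonempty A]
    (E : Finset (V × V)) (ρ : ℝ) (P : A → A → ℝ) (φ : A → A → A → ℝ)
    (hmodel : IsPinModel E ρ P φ) (x : V → A) (i : A) :
    meanDrift E ρ P φ x i =
      (1 - ρ) * ((∑ j, P j i * confType x j) - confType x i)
        + ρ * Qop φ (boundary E x) i :=
  meanDrift_eq_general E ρ P φ hmodel x i
end
end

section
/- For every configuration x in 𝒳 of a PIN model, ‖D(x) − D̄(θ(x))‖₁ ≤ 2ρ‖ξ(x) − θ(x)θ(x)ᵀ‖₁, where for a matrix M ∈ ℝ^{𝒜×𝒜} the norm ‖M‖₁ denotes Σ_{i,j}|M_{ij}|, and θ(x)θ(x)ᵀ is the matrix with entries θ_i(x)θ_j(x). -/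
open Finset Filter

noncomputable section

/-- Stationary distribution of a PIN model. -/
def IsStationaryPin {V A : Type*} [Fintype V] [DecidableEq V] [Fintype A] [DecidableEq A]
    (E : Finset (V × V)) (ρ : ℝ) (P : A → A → ℝ) (φ : A → A → A → ℝ)
    (μ : (V → A) → ℝ) : Prop :=
  (∀ x, 0 ≤ μ x) ∧ (∑ x : V → A, μ x = 1) ∧
    ∀ y : V → A, ∑ x : V → A, μ x * pinTrans E ρ P φ x y = μ y

/-- The mean drift of a PIN model, expressed through the type and the boundary of the
configuration: `D(x) = (1−ρ)(Pᵀ − I)θ(x) + ρ·Q(ξ(x))`. -/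
def meanDriftF {V A : Type*} [Fintype V] [DecidableEq A] [Fintype A]
    (E : Finset (V × V)) (ρ : ℝ) (P : A → A → ℝ) (φ : A → A → A → ℝ)
    (x : V → A) (i : A) : ℝ :=
  (1 - ρ) * ((∑ j, P j i * confType x j) - confType x i) + ρ * Qop φ (boundary E x) i

/-! Since `θ(x)` sums to one, `D̄(θ(x))` is the drift `D(x)` with the boundary `ξ(x)` replaced
by the product `θ(x)θ(x)ᵀ`, so by linearity of `Q` the difference is `ρ·Q(ξ(x) − θ(x)θ(x)ᵀ)`.
Each `φ(ℓ)` being row-stochastic and nonnegative, `Q` has `ℓ¹`-operator norm at most `2`. -/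

theorem sum_confType {V A : Type*} [Fintype V] [Nonempty V] [Fintype A] [DecidableEq A]
    (x : V → A) : ∑ i, confType x i = 1 := by
  have hV : (Fintype.card V : ℝ) ≠ 0 := by exact_mod_cast Fintype.card_ne_zero
  simp only [confType, ← Finset.sum_div, div_eq_one_iff_eq hV]
  exact_mod_cast (card_eq_sum_card_fiberwise fun v _ => mem_univ (x v)).symm

section Qop

variable {A : Type*} [Fintype A] (φ : A → A → A → ℝ)

theorem Qop_sub (ξ η : A → A → ℝ) : Qop φ (ξ - η) = Qop φ ξ - Qop φ η := by
  ext i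
  simp only [Qop, Pi.sub_apply, sub_mul, sum_sub_distrib]
  ring

theorem Qop_outer_of_sum_eq_one {θ : A → ℝ} (hθ : ∑ i, θ i = 1) (i : A) :
    Qop φ (fun j ℓ => θ j * θ ℓ) i = (∑ ℓ, θ ℓ * ∑ j, φ j i ℓ * θ j) - θ i := by
  rw [Qop, ← mul_sum, hθ, mul_one]
  congr 1
  refine sum_congr rfl fun ℓ _ => ?_
  rw [mul_sum]
  exact sum_congr rfl fun j _ => by ring

theorem sum_abs_Qop_le (hφ0 : ∀ i j ℓ, 0 ≤ φ i j ℓ) (hφ : ∀ i ℓ, ∑ j, φ i j ℓ = 1)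
    (ξ : A → A → ℝ) : ∑ i, |Qop φ ξ i| ≤ 2 * ∑ i, ∑ j, |ξ i j| := by
  have hpointwise : ∀ i, |Qop φ ξ i| ≤ (∑ ℓ, ∑ j, |ξ j ℓ| * φ j i ℓ) + ∑ ℓ, |ξ i ℓ| := by
    intro i
    refine (abs_sub _ _).trans (add_le_add ?_ (abs_sum_le_sum_abs _ _))
    refine (abs_sum_le_sum_abs _ _).trans (sum_le_sum fun ℓ _ => ?_)
    refine (abs_sum_le_sum_abs _ _).trans (sum_le_sum fun j _ => ?_)
    rw [abs_mul, abs_of_nonneg (hφ0 j i ℓ)]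
  have hmass : ∑ i, ∑ ℓ, ∑ j, |ξ j ℓ| * φ j i ℓ = ∑ ℓ, ∑ j, |ξ j ℓ| := by
    rw [sum_comm]
    refine sum_congr rfl fun ℓ _ => ?_
    rw [sum_comm]
    exact sum_congr rfl fun j _ => by rw [← mul_sum, hφ, mul_one]
  calc ∑ i, |Qop φ ξ i| ≤ ∑ i, ((∑ ℓ, ∑ j, |ξ j ℓ| * φ j i ℓ) + ∑ ℓ, |ξ i ℓ|) :=
        sum_le_sum fun i _ => hpointwise i
    _ = 2 * ∑ i, ∑ j, |ξ i j| := by rw [sum_add_distrib, hmass, sum_comm]; ring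

end Qop

theorem meanDriftF_sub_limitDrift {V A : Type*} [Fintype V] [Nonempty V] [Fintype A]
    [DecidableEq A] (E : Finset (V × V)) (ρ : ℝ) (P : A → A → ℝ) (φ : A → A → A → ℝ)
    (x : V → A) (i : A) :
    meanDriftF E ρ P φ x i - limitDrift ρ P φ (confType x) i =
      ρ * Qop φ (boundary E x - fun j ℓ => confType x j * confType x ℓ) i := by
  rw [Qop_sub, Pi.sub_apply, Qop_outer_of_sum_eq_one φ (sum_confType x), meanDriftF, limitDrift]
  ring

theorem meanDrift_close_limitDrift_general {V A : Type*} [Fintype V]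
    [Fintype A] [DecidableEq A]
    (E : Finset (V × V)) (ρ : ℝ) (P : A → A → ℝ) (φ : A → A → A → ℝ)
    (hmodel : IsPinModel E ρ P φ) (x : V → A) :
    ∑ i, |meanDriftF E ρ P φ x i - limitDrift ρ P φ (confType x) i| ≤
      2 * ρ * ∑ i, ∑ j, |boundary E x i j - confType x i * confType x j| := by
  obtain ⟨hρ0, -, -, -, hφ0, hφ, ⟨e, -⟩, -⟩ := hmodel
  have : Nonempty V := ⟨e.1⟩
  calc ∑ i, |meanDriftF E ρ P φ x i - limitDrift ρ P φ (confType x) i|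
      = ρ * ∑ i, |Qop φ (boundary E x - fun j ℓ => confType x j * confType x ℓ) i| := by
        simp only [meanDriftF_sub_limitDrift, abs_mul, abs_of_nonneg hρ0, mul_sum]
    _ ≤ ρ * (2 * ∑ i, ∑ j, |boundary E x i j - confType x i * confType x j|) :=
        mul_le_mul_of_nonneg_left (sum_abs_Qop_le φ hφ0 hφ _) hρ0
    _ = 2 * ρ * ∑ i, ∑ j, |boundary E x i j - confType x i * confType x j| := by ring

/-- Lemma: the mean drift is close to the limit drift.
`‖D(x) − D̄(θ(x))‖₁ ≤ 2ρ‖ξ(x) − θ(x)θ(x)ᵀ‖₁` for every configuration `x`. -/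
theorem meanDrift_close_limitDrift {V A : Type*} [Fintype V] [DecidableEq V]
    [Fintype A] [DecidableEq A] [Nonempty A]
    (E : Finset (V × V)) (ρ : ℝ) (P : A → A → ℝ) (φ : A → A → A → ℝ)
    (hmodel : IsPinModel E ρ P φ) (x : V → A) :
    ∑ i, |meanDriftF E ρ P φ x i - limitDrift ρ P φ (confType x) i| ≤
      2 * ρ * ∑ i, ∑ j, |boundary E x i j - confType x i * confType x j| :=
  meanDrift_close_limitDrift_general E ρ P φ hmodel x

end
end

section
/- Let μ be a stationary distribution of a PIN model on a graph with n nodes. Suppose V : ℝ^𝒜 → ℝ is twice continuously differentiable, F : 𝒳 → ℝ₊ is nonnegative, ε ≥ 0, and ∇V(θ(x))·D(x) ≤ −F(x) + ε for every configuration x ∈ 𝒳. Then there exists a constant K > 0 depending only on V such that for every δ > 0, μ({x ∈ 𝒳 : F(x) < δ}) ≥ 1 − K/(nδ) − ε/δ. -/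
open Finset Filter

noncomputable section

/-- Stationary distribution of a PIN model. -/
def PinIsStationary {V A : Type*} [Fintype V] [DecidableEq V] [Fintype A] [DecidableEq A]
    (E : Finset (V × V)) (ρ : ℝ) (P : A → A → ℝ) (φ : A → A → A → ℝ)
    (μ : (V → A) → ℝ) : Prop :=
  (∀ x, 0 ≤ μ x) ∧ (∑ x : V → A, μ x = 1) ∧
    ∀ y : V → A, ∑ x : V → A, μ x * pinTrans E ρ P φ x y = μ y

/-! Stationarity makes the `μ`-average of the expected one-step increment of `W ∘ θ` vanish.
A transition changes the type `θ` by at most `1/n` in each coordinate, so a second-order Taylor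
bound for `W` on the unit ball (constant `M`, depending only on `W`) bounds the increment from `x`
by `(∇W(θ(x))·D(x) + M/n)/n ≤ (-F(x) + ε + M/n)/n`. Averaging against `μ` gives
`E_μ[F] ≤ ε + M/n`, and Markov's inequality gives the claim with `K = M + 1`. -/

theorem ContDiff.exists_norm_sub_sub_fderiv_le {E F : Type*} [NormedAddCommGroup E]
    [NormedSpace ℝ E] [NormedAddCommGroup F] [NormedSpace ℝ F] {f : E → F}
    (hf : ContDiff ℝ 2 f) {s : Set E} (hs : Convex ℝ s) (hs' : IsCompact s) :
    ∃ M : ℝ, 0 ≤ M ∧ ∀ a ∈ s, ∀ b ∈ s, ‖f b - f a - fderiv ℝ f a (b - a)‖ ≤ M * ‖b - a‖ ^ 2 := by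
  obtain ⟨K, hK⟩ := ((hf.fderiv_right (m := 1) le_rfl).contDiffOn (s := s)).exists_lipschitzOnWith
    one_ne_zero hs hs'
  refine ⟨K, K.2, fun a ha b hb => ?_⟩
  have hderiv : ∀ z ∈ segment ℝ a b, ‖fderiv ℝ f z - fderiv ℝ f a‖ ≤ K * ‖b - a‖ := by
    intro z hz
    have hza : ‖z - a‖ ≤ ‖b - a‖ := mem_closedBall_iff_norm.mp <|
      (convex_closedBall a ‖b - a‖).segment_subset (Metric.mem_closedBall_self (norm_nonneg _))
        (mem_closedBall_iff_norm.mpr le_rfl) hz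
    calc ‖fderiv ℝ f z - fderiv ℝ f a‖ ≤ K * ‖z - a‖ :=
          hK.norm_sub_le (hs.segment_subset ha hb hz) ha
      _ ≤ K * ‖b - a‖ := by gcongr
  calc ‖f b - f a - fderiv ℝ f a (b - a)‖ ≤ K * ‖b - a‖ * ‖b - a‖ :=
        (convex_segment a b).norm_image_sub_le_of_norm_fderiv_le'
          (fun z _ => (hf.differentiable two_ne_zero).differentiableAt) hderiv
          (left_mem_segment ℝ a b) (right_mem_segment ℝ a b)
    _ = K * ‖b - a‖ ^ 2 := by ring

section FiniteMarkovChain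

variable {X : Type*} [Fintype X]

theorem sum_mul_sum_mul_sub_eq_zero_of_stationary {T : X → X → ℝ} {μ : X → ℝ}
    (hT : ∀ x, ∑ y, T x y = 1) (hμ : ∀ y, ∑ x, μ x * T x y = μ y) (f : X → ℝ) :
    ∑ x, μ x * ∑ y, T x y * (f y - f x) = 0 := by
  have hsplit : ∀ x, μ x * ∑ y, T x y * (f y - f x) = ∑ y, μ x * T x y * f y - μ x * f x := by
    intro x
    calc μ x * ∑ y, T x y * (f y - f x) = ∑ y, μ x * T x y * f y - μ x * (∑ y, T x y) * f x := by
          rw [Finset.mul_sum, Finset.mul_sum, Finset.sum_mul, ← Finset.sum_sub_distrib]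
          exact Finset.sum_congr rfl fun y _ => by ring
      _ = ∑ y, μ x * T x y * f y - μ x * f x := by rw [hT, mul_one]
  simp only [hsplit, Finset.sum_sub_distrib]
  rw [Finset.sum_comm]
  simp only [← Finset.sum_mul, hμ, sub_self]

theorem one_sub_sum_mul_div_le_massOf {μ F : X → ℝ} (hμ0 : ∀ x, 0 ≤ μ x) (hμ1 : ∑ x, μ x = 1)
    (hF : ∀ x, 0 ≤ F x) {δ : ℝ} (hδ : 0 < δ) :
    1 - (∑ x, μ x * F x) / δ ≤ massOf μ (fun x => F x < δ) := by
  classical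
  have hlhs : 1 - (∑ x, μ x * F x) / δ = ∑ x, μ x * (1 - F x / δ) := by
    simp only [mul_sub, mul_one, Finset.sum_sub_distrib, hμ1, Finset.sum_div, mul_div_assoc]
  rw [hlhs, massOf]
  refine Finset.sum_le_sum fun x _ => ?_
  split_ifs with hx
  · exact mul_le_of_le_one_right (hμ0 x) (by linarith [div_nonneg (hF x) hδ.le])
  · exact mul_nonpos_of_nonneg_of_nonpos (hμ0 x) (by rw [sub_nonpos, one_le_div hδ]; linarith)

theorem sum_mul_le_map_sum_smul_add {E : Type*} [AddCommGroup E] [Module ℝ E] {T g : X → ℝ}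
    {v : X → E} (L : E →ₗ[ℝ] ℝ) (hT0 : ∀ y, 0 ≤ T y) (hT1 : ∑ y, T y = 1) {c : ℝ}
    (hg : ∀ y, T y ≠ 0 → g y - L (v y) ≤ c) :
    ∑ y, T y * g y ≤ L (∑ y, T y • v y) + c := by
  have hterm : ∀ y, T y * g y ≤ T y * (L (v y) + c) := by
    intro y
    rcases eq_or_ne (T y) 0 with hy | hy
    · simp [hy]
    · exact mul_le_mul_of_nonneg_left (by linarith [hg y hy]) (hT0 y)
  calc ∑ y, T y * g y ≤ ∑ y, T y * (L (v y) + c) := Finset.sum_le_sum fun y _ => hterm y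
    _ = L (∑ y, T y • v y) + c := by
      simp only [mul_add, Finset.sum_add_distrib, ← Finset.sum_mul, hT1, one_mul, map_sum,
        map_smul, smul_eq_mul]

end FiniteMarkovChain

theorem Finset.apply_eq_of_filter_ne_eq_singleton {α β : Type*} [Fintype α] [DecidableEq β]
    {f g : α → β} {u : α} (h : univ.filter (fun v => f v ≠ g v) = {u}) :
    ∀ v ≠ u, f v = g v :=
  fun v hv => by_contra fun hne => hv (mem_singleton.mp (h ▸ mem_filter.mpr ⟨mem_univ v, hne⟩))

section Configurations

variable {V A : Type*} [Fintype V] [DecidableEq A]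

theorem card_filter_eq_le_add_one [DecidableEq V] {x y : V → A} {u : V}
    (h : ∀ v ≠ u, x v = y v) (i : A) :
    (univ.filter fun v => y v = i).card ≤ (univ.filter fun v => x v = i).card + 1 := by
  refine (card_le_card fun v hv => ?_).trans (card_insert_le u _)
  rw [mem_insert, mem_filter]
  by_cases hvu : v = u
  exacts [Or.inl hvu, Or.inr ⟨mem_univ v, (h v hvu).trans (mem_filter.mp hv).2⟩]

theorem norm_confType_sub_le [DecidableEq V] [Fintype A] {x y : V → A} {u : V}
    (h : ∀ v ≠ u, x v = y v) :
    ‖confType y - confType x‖ ≤ 1 / (Fintype.card V : ℝ) := by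
  have hn : (0 : ℝ) < Fintype.card V := Nat.cast_pos.mpr (Fintype.card_pos_iff.mpr ⟨u⟩)
  refine (pi_norm_le_iff_of_nonneg (by positivity)).mpr fun i => ?_
  have hyx : ((univ.filter fun v => y v = i).card : ℝ) ≤ (univ.filter fun v => x v = i).card + 1 :=
    mod_cast card_filter_eq_le_add_one h i
  have hxy : ((univ.filter fun v => x v = i).card : ℝ) ≤ (univ.filter fun v => y v = i).card + 1 :=
    mod_cast card_filter_eq_le_add_one (fun v hv => (h v hv).symm) i
  rw [Pi.sub_apply, confType, confType, ← sub_div, Real.norm_eq_abs, abs_div, abs_of_pos hn,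
    div_le_div_iff_of_pos_right hn, abs_le]
  constructor <;> linarith

theorem confType_mem_closedBall [Fintype A] (x : V → A) :
    confType x ∈ Metric.closedBall (0 : A → ℝ) 1 := by
  refine mem_closedBall_zero_iff.mpr ((pi_norm_le_iff_of_nonneg zero_le_one).mpr fun i => ?_)
  rw [Real.norm_of_nonneg (by unfold confType; positivity)]
  exact div_le_one_of_le₀ (mod_cast (card_filter_le univ _).trans_eq card_univ) (Nat.cast_nonneg _)

end Configurations

section PinModel

variable {V A : Type*} [Fintype V] [DecidableEq V]
  (E : Finset (V × V)) (ρ : ℝ) (P : A → A → ℝ) (φ : A → A → A → ℝ)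

/-- `pinRate E ρ P φ x u j = T(x, y)` for the configuration `y` obtained from `x` by switching
node `u` to a state `j ≠ x u`. -/
def pinRate (x : V → A) (u : V) (j : A) : ℝ :=
  (1 - ρ) * (1 / (Fintype.card V : ℝ)) * P (x u) j
    + (ρ / (E.card : ℝ)) * ∑ e ∈ E.filter fun e => e.1 = u, φ (x u) j (x e.2)

variable {E ρ P φ}

theorem Toff_def [DecidableEq A] (x y : V → A) :
    Toff E ρ P φ x y = if (univ.filter fun v => x v ≠ y v).card = 1 then
      ∑ u ∈ univ.filter fun v => x v ≠ y v, pinRate E ρ P φ x u (y u) else 0 :=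
  rfl

theorem Toff_self [DecidableEq A] (x : V → A) : Toff E ρ P φ x x = 0 := by
  simp [Toff_def]

theorem pinRate_nonneg [Fintype A] (h : IsPinModel E ρ P φ) (x : V → A) (u : V) (j : A) :
    0 ≤ pinRate E ρ P φ x u j := by
  obtain ⟨hρ0, hρ1, hP, -, hφ, -⟩ := h
  exact add_nonneg (mul_nonneg (mul_nonneg (sub_nonneg.mpr hρ1) (by positivity)) (hP _ _))
    (mul_nonneg (by positivity) (sum_nonneg fun e _ => hφ _ _ _))

theorem sum_pinRate_le_one [Fintype A] (h : IsPinModel E ρ P φ) (x : V → A) :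
    ∑ u, ∑ j, pinRate E ρ P φ x u j ≤ 1 := by
  obtain ⟨-, hρ1, -, hP, -, hφ, hE, -⟩ := h
  rcases isEmpty_or_nonempty V with hV | hV
  · simp
  have hn : (0 : ℝ) < Fintype.card V := Nat.cast_pos.mpr Fintype.card_pos
  have hm : (0 : ℝ) < E.card := Nat.cast_pos.mpr (card_pos.mpr hE)
  have hrow : ∀ u, ∑ j, pinRate E ρ P φ x u j
      = (1 - ρ) * (1 / (Fintype.card V : ℝ)) + ρ / E.card * (E.filter fun e => e.1 = u).card := by
    intro u
    simp only [pinRate, sum_add_distrib, ← mul_sum, hP, mul_one]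
    rw [sum_comm]
    simp [hφ]
  have hdeg : ∑ u : V, ((E.filter fun e => e.1 = u).card : ℝ) = E.card :=
    mod_cast (card_eq_sum_card_fiberwise fun e _ => mem_univ e.1).symm
  simp only [hrow, sum_add_distrib, sum_const, card_univ, nsmul_eq_mul, ← mul_sum, hdeg]
  field_simp
  linarith

variable [Fintype A] [DecidableEq A]

theorem Toff_le_sum_pinRate (h : IsPinModel E ρ P φ) (x z : V → A) :
    Toff E ρ P φ x z ≤
      ∑ u, ∑ j, if z = Function.update x u j then pinRate E ρ P φ x u j else 0 := by
  have hnn : ∀ u j, 0 ≤ if z = Function.update x u j then pinRate E ρ P φ x u j else 0 :=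
    fun u j => by split_ifs; exacts [pinRate_nonneg h x u j, le_rfl]
  rw [Toff_def]
  split_ifs with hcard
  · obtain ⟨u, hu⟩ := card_eq_one.mp hcard
    have hz : z = Function.update x u (z u) := Function.eq_update_iff.mpr
      ⟨rfl, fun v hv => (apply_eq_of_filter_ne_eq_singleton hu v hv).symm⟩
    rw [hu, sum_singleton]
    calc pinRate E ρ P φ x u (z u)
        = if z = Function.update x u (z u) then pinRate E ρ P φ x u (z u) else 0 := (if_pos hz).symm
      _ ≤ ∑ j, if z = Function.update x u j then pinRate E ρ P φ x u j else 0 :=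
        single_le_sum (fun j _ => hnn u j) (mem_univ _)
      _ ≤ _ := single_le_sum (fun u _ => sum_nonneg fun j _ => hnn u j) (mem_univ u)
  · exact sum_nonneg fun u _ => sum_nonneg fun j _ => hnn u j

theorem sum_Toff_le_one (h : IsPinModel E ρ P φ) (x : V → A) :
    ∑ z, Toff E ρ P φ x z ≤ 1 :=
  calc ∑ z, Toff E ρ P φ x z
      ≤ ∑ z, ∑ u, ∑ j, if z = Function.update x u j then pinRate E ρ P φ x u j else 0 :=
        sum_le_sum fun z _ => Toff_le_sum_pinRate h x z
    _ = ∑ u, ∑ j, pinRate E ρ P φ x u j := by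
        rw [sum_comm]
        refine sum_congr rfl fun u _ => ?_
        rw [sum_comm]
        simp
    _ ≤ 1 := sum_pinRate_le_one h x

theorem Toff_nonneg (h : IsPinModel E ρ P φ) (x y : V → A) : 0 ≤ Toff E ρ P φ x y := by
  rw [Toff_def]
  split_ifs
  exacts [sum_nonneg fun u _ => pinRate_nonneg h x u _, le_rfl]

theorem pinTrans_nonneg (h : IsPinModel E ρ P φ) (x y : V → A) : 0 ≤ pinTrans E ρ P φ x y := by
  unfold pinTrans
  split_ifs
  exacts [sub_nonneg.mpr (sum_Toff_le_one h x), Toff_nonneg h x y]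

theorem sum_pinTrans (x : V → A) : ∑ y, pinTrans E ρ P φ x y = 1 := by
  have hsplit : ∀ y, pinTrans E ρ P φ x y
      = (if x = y then 1 - ∑ z, Toff E ρ P φ x z else 0) + Toff E ρ P φ x y := by
    intro y
    unfold pinTrans
    split_ifs with hxy
    · rw [← hxy, Toff_self, add_zero]
    · rw [zero_add]
  simp only [hsplit, sum_add_distrib, sum_ite_eq, mem_univ, if_true, sub_add_cancel]

theorem norm_confType_sub_le_of_pinTrans_ne_zero {x y : V → A}
    (h : pinTrans E ρ P φ x y ≠ 0) : ‖confType y - confType x‖ ≤ 1 / (Fintype.card V : ℝ) := by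
  by_cases hxy : x = y
  · simp only [hxy, sub_self, norm_zero]
    positivity
  rw [pinTrans, if_neg hxy, Toff_def, ite_ne_right_iff] at h
  obtain ⟨u, hu⟩ := card_eq_one.mp h.1
  exact norm_confType_sub_le (apply_eq_of_filter_ne_eq_singleton hu)

theorem meanDrift_eq_smul_sum (x : V → A) :
    meanDrift E ρ P φ x
      = (Fintype.card V : ℝ) • ∑ y, pinTrans E ρ P φ x y • (confType y - confType x) := by
  funext i
  simp [meanDrift, Finset.sum_apply]

end PinModel

section Lyapunov

variable {V A : Type*} [Fintype V] [DecidableEq V] [Fintype A] [DecidableEq A]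
  {E : Finset (V × V)} {ρ : ℝ} {P : A → A → ℝ} {φ : A → A → A → ℝ}
  {W : (A → ℝ) → ℝ} {M : ℝ}

theorem card_mul_sum_pinTrans_mul_sub_le (h : IsPinModel E ρ P φ) (hn : 0 < Fintype.card V)
    (hM0 : 0 ≤ M)
    (hM : ∀ a ∈ Metric.closedBall (0 : A → ℝ) 1, ∀ b ∈ Metric.closedBall (0 : A → ℝ) 1,
      ‖W b - W a - fderiv ℝ W a (b - a)‖ ≤ M * ‖b - a‖ ^ 2) (x : V → A) :
    (Fintype.card V : ℝ) * ∑ y, pinTrans E ρ P φ x y * (W (confType y) - W (confType x))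
      ≤ fderiv ℝ W (confType x) (meanDrift E ρ P φ x) + M / Fintype.card V := by
  rw [meanDrift_eq_smul_sum, map_smul, smul_eq_mul]
  set n := (Fintype.card V : ℝ)
  have hn' : 0 < n := Nat.cast_pos.mpr hn
  have hstep : ∀ y, pinTrans E ρ P φ x y ≠ 0 →
      W (confType y) - W (confType x) - fderiv ℝ W (confType x) (confType y - confType x)
        ≤ M * (1 / n) ^ 2 := by
    intro y hy
    calc _ ≤ M * ‖confType y - confType x‖ ^ 2 :=
          (le_abs_self _).trans (hM _ (confType_mem_closedBall x) _ (confType_mem_closedBall y))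
      _ ≤ M * (1 / n) ^ 2 := by
          gcongr
          exact norm_confType_sub_le_of_pinTrans_ne_zero hy
  have hmean := sum_mul_le_map_sum_smul_add (fderiv ℝ W (confType x) : (A → ℝ) →ₗ[ℝ] ℝ)
    (pinTrans_nonneg h x) (sum_pinTrans x) hstep
  calc n * ∑ y, pinTrans E ρ P φ x y * (W (confType y) - W (confType x))
      ≤ n * (fderiv ℝ W (confType x) (∑ y, pinTrans E ρ P φ x y • (confType y - confType x))
          + M * (1 / n) ^ 2) := by gcongr; exact hmean
    _ = _ := by field_simp

theorem sum_mul_le_of_fderiv_meanDrift_le (h : IsPinModel E ρ P φ) {μ : (V → A) → ℝ}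
    (hμ : PinIsStationary E ρ P φ μ) (hM0 : 0 ≤ M)
    (hM : ∀ a ∈ Metric.closedBall (0 : A → ℝ) 1, ∀ b ∈ Metric.closedBall (0 : A → ℝ) 1,
      ‖W b - W a - fderiv ℝ W a (b - a)‖ ≤ M * ‖b - a‖ ^ 2)
    {F : (V → A) → ℝ} {ε : ℝ}
    (hdrift : ∀ x, fderiv ℝ W (confType x) (meanDrift E ρ P φ x) ≤ -F x + ε) :
    ∑ x, μ x * F x ≤ ε + M / (Fintype.card V : ℝ) := by
  obtain ⟨hμ0, hμ1, hμT⟩ := hμ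
  rcases (Fintype.card V).eq_zero_or_pos with hn | hn
  · -- Here `M / 0 = 0`, but `meanDrift` vanishes, so the drift hypothesis alone gives `F ≤ ε`.
    have hF : ∀ x, F x ≤ ε := fun x => by
      have hD : meanDrift E ρ P φ x = 0 := funext fun i => by simp [meanDrift, hn]
      simpa [hD] using hdrift x
    calc ∑ x, μ x * F x ≤ ∑ x, μ x * ε := sum_le_sum fun x _ => by gcongr; exacts [hμ0 x, hF x]
      _ = ε + M / Fintype.card V := by simp [← sum_mul, hμ1, hn]
  set n := (Fintype.card V : ℝ)
  have hzero := sum_mul_sum_mul_sub_eq_zero_of_stationary sum_pinTrans hμT (W ∘ confType)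
  simp only [Function.comp_apply] at hzero
  have hinc : ∀ x, n * ∑ y, pinTrans E ρ P φ x y * (W (confType y) - W (confType x))
      ≤ -F x + ε + M / n := fun x =>
    (card_mul_sum_pinTrans_mul_sub_le h hn hM0 hM x).trans (by linarith [hdrift x])
  have hexp : 0 ≤ ∑ x, μ x * (-F x + ε + M / n) :=
    calc 0 = ∑ x, μ x * (n * ∑ y, pinTrans E ρ P φ x y * (W (confType y) - W (confType x))) := by
          simp only [mul_left_comm _ n, ← mul_sum]
          rw [hzero, mul_zero]
      _ ≤ _ := sum_le_sum fun x _ => mul_le_mul_of_nonneg_left (hinc x) (hμ0 x)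
  have hlin : ∑ x, μ x * (-F x + ε + M / n) = -∑ x, μ x * F x + (ε + M / n) := by
    simp only [mul_add, mul_neg, sum_add_distrib, sum_neg_distrib, ← sum_mul, hμ1, one_mul]
    ring
  linarith

end Lyapunov

theorem concentration_of_approx_Lyapunov_general {A : Type*} [Fintype A] [DecidableEq A]
    (W : (A → ℝ) → ℝ) (hW : ContDiff ℝ 2 W) :
    ∃ K > (0 : ℝ), ∀ (V : Type) [Fintype V] [DecidableEq V],
      ∀ (E : Finset (V × V)) (ρ : ℝ) (P : A → A → ℝ) (φ : A → A → A → ℝ),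
        IsPinModel E ρ P φ →
      ∀ (μ : (V → A) → ℝ), PinIsStationary E ρ P φ μ →
      ∀ (F : (V → A) → ℝ), (∀ x, 0 ≤ F x) →
      ∀ ε : ℝ, 0 ≤ ε →
      (∀ x : V → A, fderiv ℝ W (confType x) (meanDrift E ρ P φ x) ≤ -F x + ε) →
      ∀ δ > (0 : ℝ),
        massOf μ (fun x => F x < δ) ≥
          1 - K / ((Fintype.card V : ℝ) * δ) - ε / δ := by
  obtain ⟨M, hM0, hM⟩ := hW.exists_norm_sub_sub_fderiv_le (convex_closedBall (0 : A → ℝ) 1)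
    (isCompact_closedBall 0 1)
  refine ⟨M + 1, by positivity, fun V _ _ E ρ P φ hmodel μ hμ F hF ε _ hdrift δ hδ => ?_⟩
  have hmean := sum_mul_le_of_fderiv_meanDrift_le hmodel hμ hM0 hM hdrift
  have hK : M / (Fintype.card V * δ) ≤ (M + 1) / (Fintype.card V * δ) := by gcongr; linarith
  calc 1 - (M + 1) / (Fintype.card V * δ) - ε / δ ≤ 1 - (ε + M / Fintype.card V) / δ := by
        rw [add_div ε, div_div]
        linarith
    _ ≤ 1 - (∑ x, μ x * F x) / δ := by gcongr
    _ ≤ massOf μ (fun x => F x < δ) := one_sub_sum_mul_div_le_massOf hμ.1 hμ.2.1 hF hδ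

/-- Proposition: concentration from an approximate Lyapunov inequality.
If `∇V(θ(x))·D(x) ≤ −F(x) + ε` for all configurations `x`, then, for a constant `K > 0`
depending only on `V`, every stationary distribution satisfies
`μ({x : F(x) < δ}) ≥ 1 − K/(nδ) − ε/δ` for every `δ > 0`. -/
theorem concentration_of_approx_Lyapunov {A : Type*} [Fintype A] [DecidableEq A] [Nonempty A]
    (W : (A → ℝ) → ℝ) (hW : ContDiff ℝ 2 W) :
    ∃ K > (0 : ℝ), ∀ (V : Type) [Fintype V] [DecidableEq V],
      ∀ (E : Finset (V × V)) (ρ : ℝ) (P : A → A → ℝ) (φ : A → A → A → ℝ),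
        IsPinModel E ρ P φ →
      ∀ (μ : (V → A) → ℝ), PinIsStationary E ρ P φ μ →
      ∀ (F : (V → A) → ℝ), (∀ x, 0 ≤ F x) →
      ∀ ε : ℝ, 0 ≤ ε →
      (∀ x : V → A, fderiv ℝ W (confType x) (meanDrift E ρ P φ x) ≤ -F x + ε) →
      ∀ δ > (0 : ℝ),
        massOf μ (fun x => F x < δ) ≥
          1 - K / ((Fintype.card V : ℝ) * δ) - ε / δ :=
  concentration_of_approx_Lyapunov_general W hW
end
end
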